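/- Let d ≥ 2. For x ∈ ℝ^d with x ≠ 0 define g_γ(x) = x_γ²/|x| − |x|/d for 1 ≤ γ ≤ d, and h_γ(x) = g_γ(x) − g_d(x)/(√d + 1) for 1 ≤ γ ≤ d−1. Then for all nonzero x, y ∈ ℝ^d the pointwise identity Σ_{γ=1}^{d−1} h_γ(x)·h_γ(y) = Σ_{γ=1}^{d} g_γ(x)·g_γ(y) holds. -/

import Mathlib

open MeasureTheory Real

/-- The standard Gaussian measure on `ℝ^d`. -/
noncomputable def stdGaussian (d : ℕ) : Measure (Fin d → ℝ) :=
  Measure.pi fun _ => ProbabilityTheory.gaussianReal 0 1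

/-- ReLU activation. -/
def relu (t : ℝ) : ℝ := max t 0

/-- Euclidean inner product on `ℝ^d`. -/
noncomputable def dot {d : ℕ} (x y : Fin d → ℝ) : ℝ := ∑ i, x i * y i

/-- Euclidean norm on `ℝ^d`. -/
noncomputable def vnorm {d : ℕ} (x : Fin d → ℝ) : ℝ := Real.sqrt (∑ i, x i ^ 2)

/-- The neural tangent kernel `k(x,y) = E_Z[relu(⟨x,Z⟩) relu(⟨y,Z⟩)]`. -/
noncomputable def ntk (d : ℕ) (x y : Fin d → ℝ) : ℝ :=
  ∫ z, relu (dot x z) * relu (dot y z) ∂ stdGaussian d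

/-- The `n`-th term of the series part of the NTK expansion. -/
noncomputable def ntkTerm {d : ℕ} (x y : Fin d → ℝ) (n : ℕ) : ℝ :=
  (Nat.choose (2 * n) n : ℝ) * dot x y ^ (2 * n + 2) /
    (2 ^ (2 * n) * (2 * n + 1) * (2 * n + 2) * (vnorm x * vnorm y) ^ (2 * n + 1))

/-- `g_γ(x) = x_γ²/|x| − |x|/d`. -/
noncomputable def gfun (d : ℕ) (γ : Fin d) (x : Fin d → ℝ) : ℝ :=
  x γ ^ 2 / vnorm x - vnorm x / d

/-- `h_γ = g_γ − g_d/(√d + 1)`, where `g_d` uses the last coordinate. -/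
noncomputable def hfun (d : ℕ) (hd : 0 < d) (γ : Fin d) (x : Fin d → ℝ) : ℝ :=
  gfun d γ x - gfun d ⟨d - 1, Nat.sub_lt hd one_pos⟩ x / (Real.sqrt d + 1)

lemma sum_gfun_eq_zero (d : ℕ) (hd : 0 < d) (x : Fin d → ℝ) (hx : x ≠ 0) :
    ∑ γ, gfun d γ x = 0 := by
  have hex : ∃ i, x i ≠ 0 := by
    by_contra h; push_neg at h; exact hx (funext h)
  obtain ⟨i, hi⟩ := hex
  have hn : 0 < vnorm x := by
    rw [vnorm]
    apply Real.sqrt_pos.2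
    exact Finset.sum_pos' (fun j _ => sq_nonneg _) ⟨i, Finset.mem_univ i, by positivity⟩
  have hsq : vnorm x ^ 2 = ∑ j, x j ^ 2 := by
    rw [vnorm, Real.sq_sqrt]; positivity
  have hdR : (d : ℝ) ≠ 0 := Nat.cast_ne_zero.2 hd.ne'
  simp only [gfun, Finset.sum_sub_distrib, ← Finset.sum_div, ← hsq,
    Finset.sum_const, Finset.card_univ, Fintype.card_fin, nsmul_eq_mul]
  field_simp
  ring

theorem hfun_sum_eq_gfun_sum (d : ℕ) (hd : 2 ≤ d) (x y : Fin d → ℝ)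
    (hx : x ≠ 0) (hy : y ≠ 0) :
    ∑ γ ∈ Finset.univ.filter (fun γ : Fin d => (γ : ℕ) < d - 1),
        hfun d (by omega) γ x * hfun d (by omega) γ y
      = ∑ γ, gfun d γ x * gfun d γ y := by
  have hd0 : 0 < d := by omega
  set L : Fin d := ⟨d - 1, Nat.sub_lt hd0 one_pos⟩ with hL
  have hfilter : Finset.univ.filter (fun γ : Fin d => (γ : ℕ) < d - 1)
      = Finset.univ.erase L := by
    ext γ
    simp only [Finset.mem_filter, Finset.mem_univ, Finset.mem_erase, true_and, and_true]
    constructor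
    · intro h hc; rw [hc] at h; exact lt_irrefl (d - 1) h
    · intro h
      have h2 := γ.isLt
      have : (γ : ℕ) ≠ d - 1 := fun hc => h (Fin.ext hc)
      omega
  set c : ℝ := Real.sqrt d + 1 with hc
  have hs : Real.sqrt d ^ 2 = d := Real.sq_sqrt (by positivity)
  have hcpos : 0 < c := by rw [hc]; positivity
  set aL := gfun d L x with haL
  set bL := gfun d L y with hbL
  have hsa : ∑ γ ∈ Finset.univ.erase L, gfun d γ x = -aL := by
    rw [haL, eq_comm, neg_eq_iff_add_eq_zero, add_comm]
    rw [← sum_gfun_eq_zero d hd0 x hx]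
    simpa using Finset.sum_erase_add Finset.univ (fun γ => gfun d γ x) (Finset.mem_univ L)
  have hsb : ∑ γ ∈ Finset.univ.erase L, gfun d γ y = -bL := by
    rw [hbL, eq_comm, neg_eq_iff_add_eq_zero, add_comm]
    rw [← sum_gfun_eq_zero d hd0 y hy]
    simpa using Finset.sum_erase_add Finset.univ (fun γ => gfun d γ y) (Finset.mem_univ L)
  have hsum : ∑ γ ∈ Finset.univ.erase L, gfun d γ x * gfun d γ y
      = (∑ γ, gfun d γ x * gfun d γ y) - aL * bL := by
    rw [haL, hbL, eq_sub_iff_add_eq]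
    simpa using Finset.sum_erase_add Finset.univ (fun γ => gfun d γ x * gfun d γ y)
      (Finset.mem_univ L)
  have hcard : ((Finset.univ.erase L).card : ℝ) = (d : ℝ) - 1 := by
    rw [Finset.card_erase_of_mem (Finset.mem_univ L), Finset.card_univ, Fintype.card_fin,
      Nat.cast_sub (by omega)]
    simp
  have hexp : ∀ γ, hfun d hd0 γ x * hfun d hd0 γ y
      = gfun d γ x * gfun d γ y - gfun d γ x * (bL / c) - (aL / c) * gfun d γ y
        + (aL / c) * (bL / c) := by
    intro γ
    simp only [hfun, ← hL, ← hc, ← haL, ← hbL]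
    ring
  rw [hfilter]
  rw [Finset.sum_congr rfl fun γ _ => hexp γ]
  rw [Finset.sum_add_distrib, Finset.sum_sub_distrib, Finset.sum_sub_distrib,
    ← Finset.sum_mul, ← Finset.mul_sum, Finset.sum_const, nsmul_eq_mul,
    hsa, hsb, hsum, hcard]
  have hkey : ((d:ℝ) - 1) / c ^ 2 + 2 / c = 1 := by
    have hc2 : c ^ 2 = (d:ℝ) + 2 * Real.sqrt d + 1 := by rw [hc]; nlinarith [hs]
    field_simp
    nlinarith [hs]
  rw [hc] at hkey ⊢
  generalize hgs : Real.sqrt (d:ℝ) = sd at hs hkey ⊢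
  rw [← hs] at hkey ⊢
  have hsd : (0:ℝ) ≤ sd := hgs ▸ Real.sqrt_nonneg _
  have h1 : sd + 1 ≠ 0 := by positivity
  field_simp
  ring
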